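/- arXiv:1802.05398 — 2 statements merged into one kernel-verified Lean document; each statement's English description precedes it below -/
import Mathlib

section
/- Let A be an associative algebra over a field k of characteristic zero, and let {{-,-}} : A ⊗ A → A ⊗ A be a k-bilinear map which is a derivation in its second argument with respect to the outer bimodule structure on A ⊗ A (i.e., {{g, f₁f₂}} = {{g,f₁}}·(1⊗f₂) + (1⊗f₁)·{{g,f₂}} with appropriate placement) and which in its first argument satisfies {{g₁g₂, f}} = {{g₁,f}}·g₂ ⊗-acting-on-the-first-leg + g₁·{{g₂,f}} acting on the second leg (bi-derivation property). Define ad : A → End(A) by ad_g(f) = μ({{g,f}}) where μ : A ⊗ A → A is multiplication. Then for any g₁, g₂ ∈ A, the maps ad_{g₁g₂} and ad_{g₂g₁} agree modulo commutators: for every f ∈ A, μ({{g₁g₂, f}}) - μ({{g₂g₁, f}}) = 0 in A/[A,A]; hence ad descends to a well-defined map A/[A,A] → Der(A) → End(A/[A,A]). -/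
open scoped TensorProduct

private lemma mul'_sandwich (k : Type*) [Field k] (A : Type*) [Ring A] [Algebra k A]
    (g : A) (u : A ⊗[k] A) :
    LinearMap.mul' k A (((1 : A) ⊗ₜ[k] g) * u) =
      LinearMap.mul' k A (u * (g ⊗ₜ[k] (1 : A))) := by
  induction u using TensorProduct.induction_on with
  | zero => simp
  | tmul x y => simp [Algebra.TensorProduct.tmul_mul_tmul, mul_assoc]
  | add x y hx hy => simp [mul_add, add_mul, hx, hy]

/-- Let `A` be an associative algebra over a field `k` of characteristic
zero and `{{-,-}} = br : A ⊗ A → A ⊗ A` a k-bilinear double bracket, i.e. a derivation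
in its second argument for the outer bimodule structure on `A ⊗ A`, and satisfying the
bi-derivation rule `{{g₁g₂,f}} = (1⊗g₁)·{{g₂,f}} + {{g₁,f}}·(g₂⊗1)` in its first
argument.  With `ad_g(f) = μ({{g,f}})` (μ = multiplication), the maps `ad_{g₁g₂}` and
`ad_{g₂g₁}` agree modulo commutators: `μ({{g₁g₂,f}}) - μ({{g₂g₁,f}}) = 0` in `A/[A,A]`;
hence `ad` descends to a well-defined map `A/[A,A] → Der(A) → End(A/[A,A])`. -/
theorem double_bracket_ad_descends
    (k : Type*) [Field k] [CharZero k]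
    (A : Type*) [Ring A] [Algebra k A]
    (br : A →ₗ[k] A →ₗ[k] A ⊗[k] A)
    (hsecond : ∀ g f₁ f₂ : A,
      br g (f₁ * f₂) = br g f₁ * ((1 : A) ⊗ₜ[k] f₂) + (f₁ ⊗ₜ[k] (1 : A)) * br g f₂)
    (hfirst : ∀ g₁ g₂ f : A,
      br (g₁ * g₂) f = ((1 : A) ⊗ₜ[k] g₁) * br g₂ f + br g₁ f * (g₂ ⊗ₜ[k] (1 : A)))
    (g₁ g₂ f : A) :
    LinearMap.mul' k A (br (g₁ * g₂) f) - LinearMap.mul' k A (br (g₂ * g₁) f) ∈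
      Submodule.span k {x : A | ∃ a b : A, x = a * b - b * a} := by
  have h : LinearMap.mul' k A (br (g₁ * g₂) f) = LinearMap.mul' k A (br (g₂ * g₁) f) := by
    rw [hfirst g₁ g₂ f, hfirst g₂ g₁ f, map_add, map_add,
      mul'_sandwich k A g₁ (br g₂ f), mul'_sandwich k A g₂ (br g₁ f)]
    exact add_comm _ _
  rw [h, sub_self]
  exact Submodule.zero_mem _
end

section
/- Let A be a finitely semi-free DG algebra on generators f_1,...,f_N and let Π = T_A(Res(A)^∨[-m]) be its (1-m)-Calabi-Yau completion, semi-free on generators {f_i, X_i := s^{-m}(sDf_i)^∨, c := s^{-m}E^∨}. Let ω ∈ Y^{(2)}(Π) be the element ω = Σ_i (-1)^{|f_i|+1}[ sDX_i ⊗ sDf_i + (-1)^{(|f_i|+1)(|X_i|+1)} sDf_i ⊗ sDX_i ] + [ sDc ⊗ E + E ⊗ sDc ]. Then the induced bimodule map ω^# : Res(Π)^∨ → Res(Π), given on the dual basis by (sDf_i)^∨ ↦ sDX_i, (sDX_i)^∨ ↦ (-1)^{m|f_i|+1} sDf_i, E^∨ ↦ sDc, (sDc)^∨ ↦ (-1)^{m+1}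 E, is an isomorphism of graded Π-bimodules (of degree 1-m). -/
noncomputable section

/-- Index set for the basis of `Res(Π)` (equivalently, for its dual basis in
`Res(Π)^∨`): `inl (inl i) ↔ sDf_i`, `inl (inr i) ↔ sDX_i`, `inr true ↔ E`,
`inr false ↔ sDc`. -/
abbrev CYIndex (N : ℕ) := (Fin N ⊕ Fin N) ⊕ Bool

/-- The involution matching each dual basis element with the basis element it is
sent to by `ω^#`: `(sDf_i)^∨ ↦ sDX_i`, `(sDX_i)^∨ ↦ sDf_i`, `E^∨ ↦ sDc`,
`(sDc)^∨ ↦ E`. -/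
def cyRot (N : ℕ) : CYIndex N → CYIndex N
  | .inl (.inl i) => .inl (.inr i)
  | .inl (.inr i) => .inl (.inl i)
  | .inr b => .inr (!b)

/-- The signs of `ω^#` on the dual basis:
`(sDf_i)^∨ ↦ sDX_i` (sign `+1`), `(sDX_i)^∨ ↦ (-1)^{m|f_i|+1}·sDf_i`,
`E^∨ ↦ sDc` (sign `+1`), `(sDc)^∨ ↦ (-1)^{m+1}·E`. -/
def cySign (k : Type*) [Field k] (N : ℕ) (m : ℤ) (deg : Fin N → ℤ) :
    CYIndex N → k
  | .inl (.inl _) => 1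
  | .inl (.inr i) => (-1 : k) ^ (m * deg i + 1)
  | .inr true => 1
  | .inr false => (-1 : k) ^ (m + 1)

/-- The map `ω^# : Res(Π)^∨ → Res(Π)` in the free-bimodule coordinates
`(CYIndex N → B)` (the coordinate module `B` standing for `Π ⊗ Π`): it sends the
dual basis to the basis by the signed permutation above. -/
def omegaSharp (k : Type*) [Field k] (B : Type*) [AddCommGroup B] [Module k B]
    (N : ℕ) (m : ℤ) (deg : Fin N → ℤ) :
    (CYIndex N → B) →ₗ[k] (CYIndex N → B) where
  toFun x i := cySign k N m deg i • x (cyRot N i)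
  map_add' x y := by
    funext i
    simp [smul_add]
  map_smul' c x := by
    funext i
    simp only [Pi.smul_apply, RingHom.id_apply]
    rw [smul_comm]

theorem bijective_smul_comp {ι κ R M : Type*} [Monoid R] [MulAction R M] {c : ι → R}
    (hc : ∀ i, IsUnit (c i)) {σ : ι → κ} (hσ : Function.Bijective σ) :
    Function.Bijective fun (x : κ → M) i => c i • x (σ i) :=
  (Function.Bijective.piMap fun i => (hc i).smul_bijective).comp hσ.comp_right

theorem cyRot_involutive (N : ℕ) : Function.Involutive (cyRot N) := by
  rintro ((i | i) | b) <;> simp [cyRot]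

theorem cySign_ne_zero (k : Type*) [Field k] (N : ℕ) (m : ℤ) (deg : Fin N → ℤ)
    (i : CYIndex N) : cySign k N m deg i ≠ 0 := by
  rcases i with (i | i) | (_ | _) <;> simp [cySign, zpow_ne_zero]

/-- Let `A` be a finitely semi-free DG algebra on generators
`f_1,…,f_N` (of degrees `deg i`) and `Π = T_A(Res(A)^∨[-m])` its `(1-m)`-Calabi–Yau
completion, semi-free on `{f_i, X_i, c}`, so that `Res(Π)` is free on the basis
`{sDf_i, sDX_i, sDc, E}` and `Res(Π)^∨` on the dual basis.  The bimodule map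
`ω^# : Res(Π)^∨ → Res(Π)` induced by the canonical 2-form
`ω = Σᵢ(-1)^{|f_i|+1}[sDX_i⊗sDf_i ± sDf_i⊗sDX_i] + [sDc⊗E + E⊗sDc]`, given on the
dual basis by `(sDf_i)^∨ ↦ sDX_i`, `(sDX_i)^∨ ↦ (-1)^{m|f_i|+1} sDf_i`,
`E^∨ ↦ sDc`, `(sDc)^∨ ↦ (-1)^{m+1} E`, permutes the free basis up to (nonzero)
signs and is therefore an isomorphism of graded `Π`-bimodules (of degree `1-m`). -/
theorem omegaSharp_bijective
    (k : Type*) [Field k] (B : Type*) [AddCommGroup B] [Module k B]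
    (N : ℕ) (m : ℤ) (deg : Fin N → ℤ) :
    Function.Bijective (omegaSharp k B N m deg) :=
  bijective_smul_comp (fun i => (cySign_ne_zero k N m deg i).isUnit)
    (cyRot_involutive N).bijective

end
end
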